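/- Let Γ be a set of pure z-filters on LMC(S). Then the following are equivalent: (a) for every topological choice function f for Γ there is a finite subfamily 𝓕 of Γ such that S^LMC = ⋃_{𝓛∈𝓕} int(cl ε(f(𝓛))); (a') for every p̃ ∈ S^LMC there exists 𝓛 ∈ Γ with 𝓛 ⊆ p̃. -/

import Mathlib

open Set Topology WeakDual BoundedContinuousFunction

noncomputable section

variable (S : Type*) [TopologicalSpace S] [T2Space S] [Semigroup S]

/-- Left translation `λ_s`, as a continuous map, given continuity of left translations. -/
def lamC (hl : ∀ s : S, Continuous (fun t => s * t)) (s : S) : C(S, S) :=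
  ⟨fun t => s * t, hl s⟩

/-- An m-admissible subalgebra of `CB(S) = S →ᵇ ℂ`. -/
structure MAdmissible (hl : ∀ s : S, Continuous (fun t => s * t)) : Type _ where
  carrier : StarSubalgebra ℂ (S →ᵇ ℂ)
  isClosed' : IsClosed (carrier : Set (S →ᵇ ℂ))
  leftInvariant : ∀ (s : S), ∀ f ∈ carrier, f.compContinuous (lamC S hl s) ∈ carrier
  mAdmissible : ∀ (μ : characterSpace ℂ carrier) (f : S →ᵇ ℂ) (hf : f ∈ carrier),
    ∃ g ∈ carrier, ∀ s : S,
      g s = μ ⟨f.compContinuous (lamC S hl s), leftInvariant s f hf⟩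

variable {hl : ∀ s : S, Continuous (fun t => s * t)}

/-- The spectrum `S^F` of an m-admissible subalgebra. -/
abbrev specF (F : MAdmissible S hl) : Type _ := characterSpace ℂ F.carrier

/-- Evaluation at a point, as an algebra homomorphism on `F`. -/
def evalHom (F : MAdmissible S hl) (s : S) : F.carrier →ₐ[ℂ] ℂ where
  toFun f := (f : S →ᵇ ℂ) s
  map_one' := rfl
  map_mul' _ _ := rfl
  map_zero' := rfl
  map_add' _ _ := rfl
  commutes' _ := rfl

/-- The evaluation map `ε : S → S^F`. -/
def epsF (F : MAdmissible S hl) (s : S) : specF S F :=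
  haveI : CompleteSpace F.carrier := F.isClosed'.completeSpace_coe
  CharacterSpace.equivAlgHom.symm (evalHom S F s)

variable (F : MAdmissible S hl)

/-- `Z(F)`: the collection of zero sets of members of `F`. -/
def ZSet : Set (Set S) := {A | ∃ f ∈ F.carrier, A = {s : S | f s = 0}}

/-- z-filters on `F`. -/
def IsZFilter (𝒜 : Set (Set S)) : Prop :=
  𝒜 ⊆ ZSet S F ∧ ∅ ∉ 𝒜 ∧ Set.univ ∈ 𝒜 ∧
    (∀ A ∈ 𝒜, ∀ B ∈ 𝒜, A ∩ B ∈ 𝒜) ∧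
    ∀ A ∈ 𝒜, ∀ B ∈ ZSet S F, A ⊆ B → B ∈ 𝒜

/-- `FS`: the collection of z-ultrafilters on `F`. -/
def zUltra : Set (Set (Set S)) :=
  {p | IsZFilter S F p ∧ ∀ q, IsZFilter S F q → p ⊆ q → q = p}

/-- `cl ε(A)` in `S^F`. -/
def epsCl (A : Set S) : Set (specF S F) := closure (epsF S F '' A)

/-- `⋂_{A ∈ p} cl ε(A)`; for `p ∈ FS` this is the singleton of the corresponding point of `S^F`. -/
def core (p : Set (Set S)) : Set (specF S F) := ⋂ A ∈ p, epsCl S F A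

/-- `p̃ = ⋂ [p]`, the intersection of the equivalence class of `p`. -/
def tilde (p : Set (Set S)) : Set (Set S) :=
  ⋂₀ {q | q ∈ zUltra S F ∧ core S F q = core S F p}

/-- pure z-filters. -/
def IsPure (𝒜 : Set (Set S)) : Prop :=
  IsZFilter S F 𝒜 ∧ ∀ p ∈ zUltra S F, 𝒜 ⊆ p → 𝒜 ⊆ tilde S F p

/-- `bar(𝒜) = {p̃ : 𝒜 ⊆ p}`, viewed as a subset of `S^F` via the identification of
`p̃` with the point `μ` such that `⋂_{A ∈ p} cl ε(A) = {μ}`. -/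
def barSet (𝒜 : Set (Set S)) : Set (specF S F) :=
  {μ | ∃ p ∈ zUltra S F, 𝒜 ⊆ p ∧ core S F p = {μ}}

/-- `𝒜° = {A ∈ 𝒜 : bar(𝒜) ⊆ int cl ε(A)}`. -/
def circA (𝒜 : Set (Set S)) : Set (Set S) :=
  {A ∈ 𝒜 | barSet S F 𝒜 ⊆ interior (epsCl S F A)}

/-- `⋂ J`, the intersection of the z-filters `p̃` corresponding to points of `J ⊆ S^F`. -/
def interOf (J : Set (specF S F)) : Set (Set S) :=
  ⋂₀ {C | ∃ p ∈ zUltra S F, ∃ μ ∈ J, core S F p = {μ} ∧ C = tilde S F p}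

/-- `⋂ [p̃]_R` for a relation `r` on `S^F`. -/
def classInter (r : specF S F → specF S F → Prop) (μ : specF S F) : Set (Set S) :=
  interOf S F {ν | r μ ν}

/-- `Ω_ℬ(A) = {x ∈ S : λ_x⁻¹(A) ∈ ℬ}`. -/
def OmegaZ (ℬ : Set (Set S)) (A : Set S) : Set S := {x : S | (fun t => x * t) ⁻¹' A ∈ ℬ}

/-- `𝒜 + ℬ`. -/
def zsum (𝒜 ℬ : Set (Set S)) : Set (Set S) :=
  {A ∈ ZSet S F | ∀ F' ∈ ZSet S F, OmegaZ S ℬ A ⊆ F' → F' ∈ 𝒜}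

/-- `𝒜 ⊙ ℬ = ⋂ bar(𝒜 + ℬ)`. -/
def odot (𝒜 ℬ : Set (Set S)) : Set (Set S) :=
  interOf S F (barSet S F (zsum S F 𝒜 ℬ))

/-- topological choice functions for a set `Γ` of z-filters. -/
def IsTCF (Γ : Set (Set (Set S))) (f : Set (Set S) → Set S) : Prop :=
  ∀ L ∈ Γ, f L ∈ L ∧ barSet S F L ⊆ interior (epsCl S F (f L))

/-- `A* = {𝓛 ∈ Γ : bar(𝓛) ∩ cl ε(A) ≠ ∅}`. -/
def starSet (Γ : Set (Set (Set S))) (A : Set S) : Set Γ :=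
  {L : Γ | (barSet S F (L : Set (Set S)) ∩ epsCl S F A).Nonempty}

/-- `A_* = {𝓛 ∈ Γ : bar(𝓛) ⊆ cl ε(A)}`. -/
def lowStar (Γ : Set (Set (Set S))) (A : Set S) : Set Γ :=
  {L : Γ | barSet S F (L : Set (Set S)) ⊆ epsCl S F A}

/-- The `τ*` quotient topology on `Γ`. -/
def tauStar (Γ : Set (Set (Set S))) : TopologicalSpace Γ :=
  TopologicalSpace.generateFrom {U | ∃ A ∈ ZSet S F, U = (starSet S F Γ A)ᶜ}

/-- The `τ_*` quotient topology on `Γ`. -/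
def tauLow (Γ : Set (Set (Set S))) : TopologicalSpace Γ :=
  TopologicalSpace.generateFrom {U | ∃ A ∈ ZSet S F, U = (lowStar S F Γ A)ᶜ}

/-- `Γ` is a quotient of `S^F`: conditions (a) and (b) of Theorem 3.9. -/
def IsQuotientOf (Γ : Set (Set (Set S))) : Prop :=
  (∀ L ∈ Γ, IsPure S F L) ∧
  (∀ f : Set (Set S) → Set S, IsTCF S F Γ f →
    ∃ 𝓕 : Finset (Set (Set S)), ↑𝓕 ⊆ Γ ∧
      (Set.univ : Set (specF S F)) = ⋃ L ∈ 𝓕, interior (epsCl S F (f L))) ∧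
  (∀ L ∈ Γ, ∀ K ∈ Γ, L ≠ K →
    ∃ A ∈ circA S F L, ∃ B ∈ circA S F K, ∀ C ∈ Γ,
      (∀ H ∈ ZSet S F, (interior (epsCl S F A))ᶜ ⊆ interior (epsCl S F H) → H ∈ C) ∨
      (∀ T ∈ ZSet S F, (interior (epsCl S F B))ᶜ ⊆ interior (epsCl S F T) → T ∈ C))

/-- The defining property of the map `γ : S^F → Γ` sending `p̃` to the unique member of `Γ`
contained in `p̃`. -/
def IsGamma (Γ : Set (Set (Set S))) (γ : specF S F → Γ) : Prop :=
  ∀ (μ : specF S F) (p : Set (Set S)), p ∈ zUltra S F → core S F p = {μ} →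
    (γ μ : Set (Set S)) ⊆ tilde S F p

/-- The defining property of the multiplication of `S^F`: `(μν)(f) = μ(T_ν f)` where
`(T_ν f)(s) = ν(L_s f)`. -/
def IsSpecMul (mul : specF S F → specF S F → specF S F) : Prop :=
  ∀ (μ ν : specF S F) (f : S →ᵇ ℂ) (hf : f ∈ F.carrier) (g : S →ᵇ ℂ) (hg : g ∈ F.carrier),
    (∀ s : S, g s = ν ⟨f.compContinuous (lamC S hl s), F.leftInvariant s f hf⟩) →
    mul μ ν ⟨f, hf⟩ = μ ⟨g, hg⟩

/-- `LMC(S)`, as a subset of `CB(S)`. -/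
def LMCset (hl : ∀ s : S, Continuous (fun t => s * t)) : Set (S →ᵇ ℂ) :=
  {f | ∀ μ : characterSpace ℂ (S →ᵇ ℂ),
    Continuous fun s : S => μ (f.compContinuous (lamC S hl s))}

/-!
Since `F` is a closed `*`-subalgebra of `CB(S)`, it is a commutative C*-algebra, so by Gelfand
duality every continuous function on `S^F` is the Gelfand transform of a member of `F`. Hence
sublevel sets of continuous functions on `S^F` pull back along `ε` to zero sets, `ε(S)` is dense,
and Urysohn's lemma separates closed sets from points by zero sets. From this: every z-ultrafilter
converges to exactly one point, every point is the limit of a z-ultrafilter, and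
`bar(𝓛) = ⋂_{A ∈ 𝓛} cl ε(A)` for a z-filter `𝓛`.

If (a') holds and `f` is a topological choice function, then the point of each `p̃` lies in
`bar(𝓛) ⊆ int cl ε(f 𝓛)` for the `𝓛 ⊆ p̃`, so these open sets cover the compact space `S^F`.
Conversely, if no `𝓛 ∈ Γ` lies in `p̃`, purity puts the point `μ` of `p̃` outside every `bar(𝓛)`;
separating `μ` from `bar(𝓛)` by a zero set in `𝓛` gives a topological choice function whose
interiors all miss `μ`, so (a) fails.
-/

section

omit [T2Space S]

variable {S}

-- With this instance `F.carrier` is a `CommCStarAlgebra` (`StarSubalgebra.commCStarAlgebra`).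
instance : IsClosed (F.carrier : Set (S →ᵇ ℂ)) := F.isClosed'

theorem exists_character_apply_eq (h : C(specF S F, ℂ)) :
    ∃ f : F.carrier, ∀ μ : specF S F, μ f = h μ :=
  ⟨(gelfandStarTransform F.carrier).symm h, fun μ => by
    simpa using congrArg (· μ) ((gelfandStarTransform F.carrier).apply_symm_apply h)⟩

theorem epsF_apply (s : S) (f : F.carrier) : epsF S F s f = (f : S →ᵇ ℂ) s := rfl

theorem denseRange_epsF : DenseRange (epsF S F) := by
  intro μ
  by_contra hμ
  obtain ⟨φ, hφ0, hφ1, -⟩ := exists_continuous_zero_one_of_isClosed isClosed_closure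
    isClosed_singleton (disjoint_singleton_right.2 hμ)
  obtain ⟨f, hf⟩ := exists_character_apply_eq F ((ContinuousMap.mk ((↑) : ℝ → ℂ)).comp φ)
  have hf0 : f = 0 := Subtype.ext <| BoundedContinuousFunction.ext fun s => by
    simpa [epsF_apply, hφ0 (subset_closure (mem_range_self s))] using hf (epsF S F s)
  simpa [hf0, hφ1 (mem_singleton μ)] using hf μ

theorem inter_mem_ZSet {A B : Set S} (hA : A ∈ ZSet S F) (hB : B ∈ ZSet S F) :
    A ∩ B ∈ ZSet S F := by
  obtain ⟨f, hf, rfl⟩ := hA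
  obtain ⟨g, hg, rfl⟩ := hB
  refine ⟨star f * f + star g * g,
    add_mem (mul_mem (star_mem hf) hf) (mul_mem (star_mem hg) hg), ?_⟩
  ext s
  have : (star f * f + star g * g) s = ((‖f s‖ ^ 2 + ‖g s‖ ^ 2 : ℝ) : ℂ) := by
    simp [Complex.conj_mul']
  simp only [mem_inter_iff, mem_ofPred_eq, this, Complex.ofReal_eq_zero]
  rw [add_eq_zero_iff_of_nonneg (by positivity) (by positivity)]
  simp

theorem setOf_le_mem_ZSet (ψ : C(specF S F, ℝ)) (c : ℝ) :
    {s | ψ (epsF S F s) ≤ c} ∈ ZSet S F := by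
  obtain ⟨f, hf⟩ := exists_character_apply_eq F
    ((ContinuousMap.mk ((↑) : ℝ → ℂ)).comp ((ψ - ContinuousMap.const _ c) ⊔ 0))
  refine ⟨f, f.2, ?_⟩
  ext s
  simp [← epsF_apply, hf]

theorem epsCl_mono {A B : Set S} (h : A ⊆ B) : epsCl S F A ⊆ epsCl S F B :=
  closure_mono (image_mono h)

theorem epsCl_univ : epsCl S F univ = univ := by
  rw [epsCl, image_univ, (denseRange_epsF F).closure_range]

theorem subset_interior_epsCl_of_isOpen {U : Set (specF S F)} (hU : IsOpen U) {A : Set S}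
    (hUA : epsF S F ⁻¹' U ⊆ A) : U ⊆ interior (epsCl S F A) :=
  interior_maximal ((denseRange_epsF F).subset_closure_image_preimage_of_isOpen hU |>.trans
    (closure_mono (image_mono hUA))) hU

theorem exists_ZSet_separating {K : Set (specF S F)} (hK : IsClosed K) {μ : specF S F}
    (hμ : μ ∉ K) : ∃ A ∈ ZSet S F, ∃ U : Set (specF S F),
      IsOpen U ∧ K ⊆ U ∧ epsF S F ⁻¹' U ⊆ A ∧ μ ∉ epsCl S F A := by
  obtain ⟨φ, hφK, hφμ, -⟩ := exists_continuous_zero_one_of_isClosed hK isClosed_singleton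
    (disjoint_singleton_right.2 hμ)
  refine ⟨_, setOf_le_mem_ZSet F φ (1 / 2), {x | φ x < 1 / 2},
    isOpen_lt φ.continuous continuous_const, fun x hx => by simp [hφK hx],
    fun s hs => show φ (epsF S F s) ≤ 1 / 2 from le_of_lt hs, fun hμA => ?_⟩
  have : φ μ ≤ 1 / 2 := closure_minimal (by rintro - ⟨s, hs, rfl⟩; exact hs)
    (isClosed_le φ.continuous continuous_const) hμA
  norm_num [hφμ (mem_singleton μ)] at this

theorem univ_mem_ZSet : univ ∈ ZSet S F :=
  ⟨0, zero_mem _, by ext; simp⟩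

theorem isZFilter_singleton_univ [Nonempty S] : IsZFilter S F {univ} :=
  ⟨by simpa using univ_mem_ZSet F, fun h => empty_ne_univ (mem_singleton_iff.1 h), rfl, by simp,
    by rintro _ rfl B - hB; exact univ_subset_iff.1 hB⟩

variable {F}

theorem isZFilter_sUnion {c : Set (Set (Set S))} (hc : ∀ 𝒜 ∈ c, IsZFilter S F 𝒜)
    (hchain : IsChain (· ⊆ ·) c) (hne : c.Nonempty) : IsZFilter S F (⋃₀ c) := by
  obtain ⟨𝒜₀, h𝒜₀⟩ := hne
  refine ⟨?_, ?_, ⟨𝒜₀, h𝒜₀, (hc 𝒜₀ h𝒜₀).2.2.1⟩, ?_, ?_⟩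
  · rintro A ⟨𝒜, h𝒜, hA⟩
    exact (hc 𝒜 h𝒜).1 hA
  · rintro ⟨𝒜, h𝒜, hempty⟩
    exact (hc 𝒜 h𝒜).2.1 hempty
  · rintro A ⟨𝒜, h𝒜, hA⟩ B ⟨ℬ, hℬ, hB⟩
    rcases hchain.total h𝒜 hℬ with h | h
    · exact ⟨ℬ, hℬ, (hc ℬ hℬ).2.2.2.1 A (h hA) B hB⟩
    · exact ⟨𝒜, h𝒜, (hc 𝒜 h𝒜).2.2.2.1 A hA B (h hB)⟩
  · rintro A ⟨𝒜, h𝒜, hA⟩ B hB hAB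
    exact ⟨𝒜, h𝒜, (hc 𝒜 h𝒜).2.2.2.2 A hA B hB hAB⟩

theorem exists_zUltra_superset {𝒜 : Set (Set S)} (h𝒜 : IsZFilter S F 𝒜) :
    ∃ p ∈ zUltra S F, 𝒜 ⊆ p := by
  obtain ⟨p, h𝒜p, hmax⟩ := zorn_subset_nonempty {q | IsZFilter S F q}
    (fun c hc hchain hne => ⟨⋃₀ c, isZFilter_sUnion hc hchain hne,
      fun _ => subset_sUnion_of_mem⟩) 𝒜 h𝒜
  exact ⟨p, ⟨hmax.prop, fun q hq hpq => (hmax.eq_of_subset hq hpq).symm⟩, h𝒜p⟩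

theorem IsZFilter.core_nonempty {𝒜 : Set (Set S)} (h𝒜 : IsZFilter S F 𝒜) :
    (core S F 𝒜).Nonempty := by
  obtain ⟨-, hempty, huniv, hinter, -⟩ := h𝒜
  have : Nonempty 𝒜 := ⟨⟨univ, huniv⟩⟩
  rw [core, biInter_eq_iInter]
  refine IsCompact.nonempty_iInter_of_directed_nonempty_isCompact_isClosed
    (fun A : 𝒜 => epsCl S F A) (fun A B => ?_) (fun A => ?_)
    (fun _ => isClosed_closure.isCompact) (fun _ => isClosed_closure)
  · exact ⟨⟨A ∩ B, hinter _ A.2 _ B.2⟩, epsCl_mono F inter_subset_left,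
      epsCl_mono F inter_subset_right⟩
  · have hA : (A : Set S).Nonempty := nonempty_iff_ne_empty.2 fun h => hempty (h ▸ A.2)
    exact (hA.image _).mono subset_closure

def nhdsZFilter (𝒜 : Set (Set S)) (ν : specF S F) : Set (Set S) :=
  {C | C ∈ ZSet S F ∧ ∃ A ∈ 𝒜, ∃ U : Set (specF S F), IsOpen U ∧ ν ∈ U ∧
    A ∩ epsF S F ⁻¹' U ⊆ C}

theorem isZFilter_nhdsZFilter {𝒜 : Set (Set S)} (h𝒜 : IsZFilter S F 𝒜) {ν : specF S F}
    (hν : ∀ A ∈ 𝒜, ν ∈ epsCl S F A) : IsZFilter S F (nhdsZFilter 𝒜 ν) := by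
  obtain ⟨-, -, huniv, hinter, -⟩ := h𝒜
  refine ⟨fun C hC => hC.1, ?_,
    ⟨univ_mem_ZSet F, univ, huniv, univ, isOpen_univ, mem_univ ν, subset_univ _⟩, ?_, ?_⟩
  · rintro ⟨-, A, hA, U, hU, hνU, hAU⟩
    obtain ⟨-, hU, s, hsA, rfl⟩ := mem_closure_iff.1 (hν A hA) U hU hνU
    exact hAU ⟨hsA, hU⟩
  · rintro C ⟨hC, A, hA, U, hU, hνU, hAU⟩ C' ⟨hC', A', hA', U', hU', hνU', hAU'⟩
    exact ⟨inter_mem_ZSet F hC hC', A ∩ A', hinter _ hA _ hA', U ∩ U', hU.inter hU',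
      ⟨hνU, hνU'⟩, fun s hs => ⟨hAU ⟨hs.1.1, hs.2.1⟩, hAU' ⟨hs.1.2, hs.2.2⟩⟩⟩
  · rintro C ⟨-, A, hA, U, hU, hνU, hAU⟩ B hB hCB
    exact ⟨hB, A, hA, U, hU, hνU, hAU.trans hCB⟩

theorem exists_zUltra_superset_core_eq_singleton {𝒜 : Set (Set S)} (h𝒜 : IsZFilter S F 𝒜)
    {ν : specF S F} (hν : ∀ A ∈ 𝒜, ν ∈ epsCl S F A) :
    ∃ p ∈ zUltra S F, 𝒜 ⊆ p ∧ core S F p = {ν} := by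
  obtain ⟨p, hp, hνp⟩ := exists_zUltra_superset (isZFilter_nhdsZFilter h𝒜 hν)
  refine ⟨p, hp, fun A hA => hνp ⟨h𝒜.1 hA, A, hA, univ, isOpen_univ, mem_univ ν,
    inter_subset_left⟩, hp.1.core_nonempty.subset_singleton_iff.1 fun ρ hρ => ?_⟩
  by_contra hρν
  obtain ⟨A, hA, U, hU, hνU, hUA, hρA⟩ := exists_ZSet_separating F isClosed_singleton hρν
  exact hρA (mem_iInter₂.1 hρ A
    (hνp ⟨hA, univ, h𝒜.2.2.1, U, hU, hνU rfl, by rwa [univ_inter]⟩))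

theorem exists_core_eq_singleton {p : Set (Set S)} (hp : p ∈ zUltra S F) :
    ∃ μ, core S F p = {μ} := by
  obtain ⟨μ, hμ⟩ := hp.1.core_nonempty
  obtain ⟨q, hq, hpq, hqμ⟩ := exists_zUltra_superset_core_eq_singleton hp.1 (mem_iInter₂.1 hμ)
  exact ⟨μ, hp.2 q hq.1 hpq ▸ hqμ⟩

variable (F) in
theorem exists_zUltra_core_eq_singleton (μ : specF S F) :
    ∃ p ∈ zUltra S F, core S F p = {μ} := by
  have : Nonempty S := (denseRange_epsF F).nonempty_iff.2 ⟨μ⟩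
  obtain ⟨p, hp, -, hpμ⟩ := exists_zUltra_superset_core_eq_singleton
    (isZFilter_singleton_univ F) (by simp [epsCl_univ])
  exact ⟨p, hp, hpμ⟩

theorem tilde_subset {p : Set (Set S)} (hp : p ∈ zUltra S F) : tilde S F p ⊆ p :=
  sInter_subset_of_mem ⟨hp, rfl⟩

theorem IsZFilter.barSet_eq_core {𝒜 : Set (Set S)} (h𝒜 : IsZFilter S F 𝒜) :
    barSet S F 𝒜 = core S F 𝒜 := by
  ext μ
  refine ⟨?_, fun hμ => exists_zUltra_superset_core_eq_singleton h𝒜 (mem_iInter₂.1 hμ)⟩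
  rintro ⟨p, -, h𝒜p, hpμ⟩
  exact biInter_subset_biInter_left h𝒜p (hpμ ▸ mem_singleton μ : μ ∈ core S F p)

theorem IsZFilter.exists_mem_barSet_subset_interior {L : Set (Set S)} (hL : IsZFilter S F L)
    {μ : specF S F} (hμ : μ ∉ barSet S F L) :
    ∃ A ∈ L, barSet S F L ⊆ interior (epsCl S F A) ∧ μ ∉ epsCl S F A := by
  rw [hL.barSet_eq_core] at hμ ⊢
  obtain ⟨A₀, hA₀, hμA₀⟩ : ∃ A₀ ∈ L, μ ∉ epsCl S F A₀ := by simpa [core] using hμ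
  obtain ⟨A, hA, U, hU, hA₀U, hUA, hμA⟩ := exists_ZSet_separating F isClosed_closure hμA₀
  have hA₀A : A₀ ⊆ A := fun s hs => hUA (hA₀U (subset_closure (mem_image_of_mem _ hs)))
  exact ⟨A, hL.2.2.2.2 A₀ hA₀ A hA hA₀A, (biInter_subset_of_mem hA₀).trans
    (hA₀U.trans (subset_interior_epsCl_of_isOpen F hU hUA)), hμA⟩

theorem IsPure.subset_tilde_of_mem_barSet {L : Set (Set S)} (hL : IsPure S F L)
    {p : Set (Set S)} {μ : specF S F} (hpμ : core S F p = {μ})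
    (hμ : μ ∈ barSet S F L) : L ⊆ tilde S F p := by
  obtain ⟨q, hq, hLq, hqμ⟩ := hμ
  simpa only [tilde, hqμ, hpμ] using hL.2 q hq hLq

end

theorem statement0
    (Γ : Set (Set (Set S))) (hΓ : ∀ L ∈ Γ, IsPure S F L) :
    (∀ f : Set (Set S) → Set S, IsTCF S F Γ f →
        ∃ 𝓕 : Finset (Set (Set S)), ↑𝓕 ⊆ Γ ∧
          (Set.univ : Set (specF S F)) = ⋃ L ∈ 𝓕, interior (epsCl S F (f L))) ↔
      (∀ p ∈ zUltra S F, ∃ L ∈ Γ, L ⊆ tilde S F p) := by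
  constructor
  · intro hcover p hp
    obtain ⟨μ, hpμ⟩ := exists_core_eq_singleton hp
    by_contra! hΓp
    have hμ : ∀ L ∈ Γ, μ ∉ barSet S F L := fun L hL hμL =>
      hΓp L hL ((hΓ L hL).subset_tilde_of_mem_barSet hpμ hμL)
    choose! g hgL hgbar hgμ using fun L hL =>
      (hΓ L hL).1.exists_mem_barSet_subset_interior (hμ L hL)
    obtain ⟨𝓕, h𝓕Γ, h𝓕⟩ := hcover g fun L hL => ⟨hgL L hL, hgbar L hL⟩
    obtain ⟨L, hL𝓕, hμL⟩ := mem_iUnion₂.1 (h𝓕 ▸ mem_univ μ)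
    exact hgμ L (h𝓕Γ hL𝓕) (interior_subset hμL)
  · intro hΓp f hf
    have hcover : univ ⊆ ⋃ L ∈ Γ, interior (epsCl S F (f L)) := fun μ _ => by
      obtain ⟨p, hp, hpμ⟩ := exists_zUltra_core_eq_singleton F μ
      obtain ⟨L, hL, hLp⟩ := hΓp p hp
      exact mem_iUnion₂.2 ⟨L, hL, (hf L hL).2 ⟨p, hp, hLp.trans (tilde_subset hp), hpμ⟩⟩
    obtain ⟨𝓕, h𝓕Γ, h𝓕, hcover𝓕⟩ := isCompact_univ.elim_finite_subcover_image
      (fun _ _ => isOpen_interior) hcover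
    exact ⟨h𝓕.toFinset, by simpa using h𝓕Γ, (univ_subset_iff.1 (by simpa using hcover𝓕)).symm⟩

end
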